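/- arXiv:2406.06306 — 5 statements merged into one kernel-verified Lean document; each statement's English description precedes it below -/
import Mathlib

section
/- If y ∈ ℂᴺ is a unit eigenvector of the model matrix W = D A Dᵀ with nonzero eigenvalue λ, then y lies in the range of V = (1/√N) D M^{-1/2}, and x = Vᵀ y is a unit eigenvector of A_μ = √M A √M with eigenvalue λ/N. -/
/-!
The block indicator matrix `D` has pairwise disjoint column supports, so `Dᵀ D = diag k`, and
`k = N μ` makes the columns of `V = N^{-1/2} D M^{-1/2}` orthonormal: `Vᵀ V = 1`. Since
`D = √N V √M`, the model matrix factors as `W = N V A_μ Vᵀ`. Hence `V Vᵀ W = W`, so every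
eigenvector of `W` with nonzero eigenvalue satisfies `V Vᵀ y = y`, and `Vᵀ W = N A_μ Vᵀ` turns
`W y = λ y` into `A_μ (Vᵀ y) = (λ / N) Vᵀ y`. As `V` is real, `‖Vᵀ y‖² = ⟨y, V Vᵀ y⟩ = 1`.
-/

open scoped BigOperators ComplexConjugate
open Matrix

/-- The `N × n` block indicator matrix, over `ℂ`. -/
def blockD (N n : ℕ) (k : Fin n → ℕ) : Matrix (Fin N) (Fin n) ℂ :=
  Matrix.of fun r j =>
    if (∑ i : Fin n, if (i : ℕ) < (j : ℕ) then k i else 0) ≤ (r : ℕ) ∧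
        (r : ℕ) < (∑ i : Fin n, if (i : ℕ) < (j : ℕ) then k i else 0) + k j
    then 1 else 0

namespace Matrix

variable {ι κ m n K : Type*}

theorem transpose_mul_self_of_indicator [Fintype ι] [DecidableEq ι] [DecidableEq κ] {R : Type*}
    [NonAssocSemiring R] (s : κ → Finset ι) (hs : Pairwise (Function.onFun Disjoint s)) :
    (of fun r j => if r ∈ s j then 1 else 0 : Matrix ι κ R)ᵀ *
        (of fun r j => if r ∈ s j then 1 else 0 : Matrix ι κ R) =
      diagonal fun j => ((s j).card : R) := by
  ext i j
  simp only [mul_apply, transpose_apply, of_apply, ite_zero_mul_ite_zero, mul_one,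
    Finset.sum_boole, diagonal_apply]
  split_ifs with hij
  · subst hij; simp
  · simp [Finset.filter_and, Finset.disjoint_iff_inter_eq_empty.mp (hs hij)]

section Eigen

variable [Fintype m] [Fintype n] [DecidableEq n] [Field K] {V : Matrix m n K} {B : Matrix n n K}
  {W : Matrix m m K} {c lam : K} {y : m → K}

theorem mulVec_transpose_mulVec_of_mulVec_eq_smul (hV : Vᵀ * V = 1)
    (hW : W = c • (V * B * Vᵀ)) (hlam : lam ≠ 0) (hy : W *ᵥ y = lam • y) :
    V *ᵥ (Vᵀ *ᵥ y) = y := by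
  have hproj : V * Vᵀ * W = W := by
    rw [hW, Matrix.mul_smul]
    simp only [Matrix.mul_assoc]
    rw [← Matrix.mul_assoc Vᵀ V, hV, Matrix.one_mul]
  have hy' : y = lam⁻¹ • W *ᵥ y := by rw [hy, smul_smul, inv_mul_cancel₀ hlam, one_smul]
  rw [hy', mulVec_smul, mulVec_smul, mulVec_mulVec, mulVec_mulVec, hproj]

theorem transpose_mulVec_of_mulVec_eq_smul (hV : Vᵀ * V = 1)
    (hW : W = c • (V * B * Vᵀ)) (hc : c ≠ 0) (hy : W *ᵥ y = lam • y) :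
    B *ᵥ (Vᵀ *ᵥ y) = (lam / c) • (Vᵀ *ᵥ y) := by
  have hcompress : Vᵀ * W = c • (B * Vᵀ) := by
    rw [hW, Matrix.mul_smul, ← Matrix.mul_assoc, ← Matrix.mul_assoc, hV, Matrix.one_mul]
  have := congrArg (c⁻¹ • ·) (congrArg (· *ᵥ y) hcompress)
  simp only [← mulVec_mulVec, hy, mulVec_smul, smul_mulVec, smul_smul] at this
  rw [inv_mul_cancel₀ hc, one_smul] at this
  rw [← this, div_eq_inv_mul]

end Eigen

theorem star_transpose_mulVec_dotProduct [Fintype m] [Fintype n] [CommSemiring K] [StarRing K]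
    {V : Matrix m n K} (hV : Vᴴ = Vᵀ) (y : m → K) :
    star (Vᵀ *ᵥ y) ⬝ᵥ (Vᵀ *ᵥ y) = star y ⬝ᵥ (V *ᵥ (Vᵀ *ᵥ y)) := by
  rw [star_mulVec, conjTranspose_transpose_eq_transpose_conjTranspose, hV, transpose_transpose,
    ← dotProduct_mulVec]

end Matrix

theorem Fin.card_filter_val_mem {N : ℕ} (s : Finset ℕ) (h : ∀ m ∈ s, m < N) :
    (Finset.univ.filter fun r : Fin N => (r : ℕ) ∈ s).card = s.card := by
  rw [← Finset.card_attachFin s h]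
  congr 1
  ext r
  simp [Finset.mem_attachFin]

section Blocks

variable {N n : ℕ}

def blockStart (k : Fin n → ℕ) (m : ℕ) : ℕ := ∑ i : Fin n, if (i : ℕ) < m then k i else 0

def blockRows (N : ℕ) (k : Fin n → ℕ) (j : Fin n) : Finset (Fin N) :=
  Finset.univ.filter fun r => (r : ℕ) ∈ Finset.Ico (blockStart k j) (blockStart k j + k j)

variable {k : Fin n → ℕ}

theorem blockStart_succ (j : Fin n) : blockStart k (j + 1) = blockStart k j + k j := by
  rw [blockStart, blockStart, ← Fintype.sum_ite_eq' j k, ← Finset.sum_add_distrib]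
  refine Finset.sum_congr rfl fun i _ => ?_
  by_cases hij : i = j
  · simp [hij]
  · have := Fin.val_ne_of_ne hij
    simp only [hij, if_false, add_zero]
    split_ifs <;> omega

theorem blockStart_mono : Monotone (blockStart k) := fun _ _ h =>
  Finset.sum_le_sum fun i _ => by split_ifs <;> omega

theorem blockStart_le_sum (m : ℕ) : blockStart k m ≤ ∑ i, k i :=
  Finset.sum_le_sum fun i _ => by split_ifs <;> omega

theorem blockStart_add_le_of_lt {i j : Fin n} (h : i < j) :
    blockStart k i + k i ≤ blockStart k j :=
  blockStart_succ (k := k) i ▸ blockStart_mono (Nat.succ_le_of_lt h)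

theorem pairwise_disjoint_blockRows : Pairwise (Function.onFun Disjoint (blockRows N k)) := by
  refine (pairwise_disjoint_on _).mpr fun i j h => ?_
  have := blockStart_add_le_of_lt (k := k) h
  simp only [blockRows, Finset.disjoint_filter, Finset.mem_Ico]
  omega

theorem card_blockRows (hksum : ∑ i, k i = N) (j : Fin n) : (blockRows N k j).card = k j := by
  rw [blockRows, Fin.card_filter_val_mem, Nat.card_Ico, Nat.add_sub_cancel_left]
  intro m hm
  have hend := (blockStart_succ (k := k) j).symm.trans_le (blockStart_le_sum _)
  rw [Finset.mem_Ico] at hm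
  omega

theorem blockD_eq_of_blockRows :
    blockD N n k = of fun r j => if r ∈ blockRows N k j then 1 else 0 := by
  ext r j
  simp [blockD, blockRows, blockStart]

theorem blockD_transpose_mul_blockD (hksum : ∑ i, k i = N) :
    (blockD N n k)ᵀ * blockD N n k = diagonal fun j => (k j : ℂ) := by
  rw [blockD_eq_of_blockRows, transpose_mul_self_of_indicator _ pairwise_disjoint_blockRows]
  simp only [card_blockRows hksum]

theorem blockD_conjTranspose : (blockD N n k)ᴴ = (blockD N n k)ᵀ := by
  ext j r
  simp only [conjTranspose_apply, transpose_apply, blockD, of_apply]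
  split_ifs <;> simp

end Blocks

noncomputable def normalizedBlockD (N n : ℕ) (k : Fin n → ℕ) (μ : Fin n → ℝ) :
    Matrix (Fin N) (Fin n) ℂ :=
  ((Real.sqrt N : ℂ))⁻¹ • (blockD N n k * diagonal fun i => ((Real.sqrt (μ i))⁻¹ : ℂ))

section NormalizedBlocks

variable {N n : ℕ} {k : Fin n → ℕ} {μ : Fin n → ℝ}

theorem normalizedBlockD_conjTranspose :
    (normalizedBlockD N n k μ)ᴴ = (normalizedBlockD N n k μ)ᵀ := by
  simp only [normalizedBlockD, conjTranspose_smul, transpose_smul, conjTranspose_mul,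
    transpose_mul, blockD_conjTranspose, diagonal_conjTranspose, diagonal_transpose]
  congr 2
  · simp
  · ext i j
    simp [diagonal_apply]

theorem transpose_mul_normalizedBlockD (hN : 0 < N) (hμ : ∀ i, 0 < μ i)
    (hk : ∀ i, (k i : ℝ) = μ i * N) (hksum : ∑ i, k i = N) :
    (normalizedBlockD N n k μ)ᵀ * normalizedBlockD N n k μ = 1 := by
  have hentry : ∀ i, (Real.sqrt N)⁻¹ * (Real.sqrt N)⁻¹ *
      ((Real.sqrt (μ i))⁻¹ * (k i * (Real.sqrt (μ i))⁻¹)) = 1 := by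
    intro i
    have hN' : (0 : ℝ) < N := Nat.cast_pos.mpr hN
    rw [hk, ← mul_inv, Real.mul_self_sqrt hN'.le]
    field_simp
    rw [Real.sq_sqrt (hμ i).le, div_self (hμ i).ne']
  rw [normalizedBlockD, transpose_smul, transpose_mul, diagonal_transpose, smul_mul,
    Matrix.mul_smul, smul_smul, Matrix.mul_assoc, ← Matrix.mul_assoc _ (blockD N n k),
    blockD_transpose_mul_blockD hksum, diagonal_mul_diagonal, diagonal_mul_diagonal,
    ← diagonal_smul, ← diagonal_one]
  congr 1
  funext i
  simpa using congrArg ((↑) : ℝ → ℂ) (hentry i)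

theorem blockD_mul_mul_transpose (hN : 0 < N) (hμ : ∀ i, 0 < μ i) (B : Matrix (Fin n) (Fin n) ℂ) :
    blockD N n k * B * (blockD N n k)ᵀ = (N : ℂ) • (normalizedBlockD N n k μ *
      (diagonal (fun i => (Real.sqrt (μ i) : ℂ)) * B * diagonal fun i => (Real.sqrt (μ i) : ℂ)) *
      (normalizedBlockD N n k μ)ᵀ) := by
  have hsqrtN : (Real.sqrt N : ℂ) ≠ 0 := by
    exact_mod_cast (Real.sqrt_pos.mpr (Nat.cast_pos.mpr hN)).ne'
  have hD : blockD N n k =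
      (Real.sqrt N : ℂ) • (normalizedBlockD N n k μ * diagonal fun i => (Real.sqrt (μ i) : ℂ)) := by
    rw [normalizedBlockD, smul_mul, smul_smul, mul_inv_cancel₀ hsqrtN, one_smul, Matrix.mul_assoc,
      diagonal_mul_diagonal]
    have hcancel : ∀ i, ((Real.sqrt (μ i) : ℂ))⁻¹ * Real.sqrt (μ i) = 1 := fun i =>
      inv_mul_cancel₀ (by exact_mod_cast (Real.sqrt_pos.mpr (hμ i)).ne')
    simp only [hcancel, diagonal_one, Matrix.mul_one]
  have hN2 : (Real.sqrt N : ℂ) * Real.sqrt N = N := by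
    exact_mod_cast Real.mul_self_sqrt (Nat.cast_nonneg N)
  rw [hD, transpose_smul, transpose_mul, diagonal_transpose, smul_mul, Matrix.mul_smul,
    smul_mul, smul_smul, hN2]
  simp only [Matrix.mul_assoc]

end NormalizedBlocks

theorem eigvec_W_to_eigvec_Amu_general (N n : ℕ) (hN : 0 < N)
    (μ : Fin n → ℝ) (hμpos : ∀ i, 0 < μ i)
    (k : Fin n → ℕ)
    (hk : ∀ i, (k i : ℝ) = μ i * N) (hksum : ∑ i, k i = N)
    (A : Matrix (Fin n) (Fin n) ℝ)
    (W : Matrix (Fin N) (Fin N) ℂ)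
    (hW : W = blockD N n k * A.map (Complex.ofReal) * (blockD N n k)ᵀ)
    (Aμ : Matrix (Fin n) (Fin n) ℂ)
    (hAμ : Aμ = Matrix.diagonal (fun i => (Real.sqrt (μ i) : ℂ)) * A.map (Complex.ofReal) *
        Matrix.diagonal (fun i => (Real.sqrt (μ i) : ℂ)))
    (V : Matrix (Fin N) (Fin n) ℂ)
    (hV : V = ((Real.sqrt N : ℂ))⁻¹ •
        (blockD N n k * Matrix.diagonal fun i => ((Real.sqrt (μ i))⁻¹ : ℂ)))
    (lam : ℝ) (hlam : lam ≠ 0)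
    (y : Fin N → ℂ) (hy_unit : star y ⬝ᵥ y = 1)
    (hy_eig : W.mulVec y = (lam : ℂ) • y) :
    (∃ x₀ : Fin n → ℂ, y = V.mulVec x₀) ∧
      star (Vᵀ.mulVec y) ⬝ᵥ (Vᵀ.mulVec y) = 1 ∧
      Aμ.mulVec (Vᵀ.mulVec y) = ((lam / N : ℝ) : ℂ) • (Vᵀ.mulVec y) := by
  replace hV : V = normalizedBlockD N n k μ := hV
  subst hV
  have hVV := transpose_mul_normalizedBlockD hN hμpos hk hksum
  have hWV : W = (N : ℂ) • (normalizedBlockD N n k μ * Aμ * (normalizedBlockD N n k μ)ᵀ) := by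
    rw [hW, hAμ, blockD_mul_mul_transpose hN hμpos]
  have hy_range := mulVec_transpose_mulVec_of_mulVec_eq_smul hVV hWV
    (Complex.ofReal_ne_zero.mpr hlam) hy_eig
  refine ⟨⟨_, hy_range.symm⟩, ?_, ?_⟩
  · rw [star_transpose_mulVec_dotProduct normalizedBlockD_conjTranspose, hy_range, hy_unit]
  · rw [transpose_mulVec_of_mulVec_eq_smul hVV hWV (Nat.cast_ne_zero.mpr hN.ne') hy_eig,
      Complex.ofReal_div, Complex.ofReal_natCast]

/-- a unit `λ`-eigenvector `y` of `W = D A Dᵀ` (with `λ ≠ 0`) lies in the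
range of `V = (1/√N) D M^{-1/2}`, and `x = Vᵀ y` is a unit `(λ/N)`-eigenvector of
`A_μ = √M A √M`. -/
theorem eigvec_W_to_eigvec_Amu (N n : ℕ) (hN : 0 < N) (hn : 0 < n)
    (μ : Fin n → ℝ) (hμpos : ∀ i, 0 < μ i) (hμsum : ∑ i, μ i = 1)
    (k : Fin n → ℕ) (hkpos : ∀ i, 0 < k i)
    (hk : ∀ i, (k i : ℝ) = μ i * N) (hksum : ∑ i, k i = N)
    (A : Matrix (Fin n) (Fin n) ℝ) (hA : A.IsSymm)
    (W : Matrix (Fin N) (Fin N) ℂ)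
    (hW : W = blockD N n k * A.map (Complex.ofReal) * (blockD N n k)ᵀ)
    (Aμ : Matrix (Fin n) (Fin n) ℂ)
    (hAμ : Aμ = Matrix.diagonal (fun i => (Real.sqrt (μ i) : ℂ)) * A.map (Complex.ofReal) *
        Matrix.diagonal (fun i => (Real.sqrt (μ i) : ℂ)))
    (V : Matrix (Fin N) (Fin n) ℂ)
    (hV : V = ((Real.sqrt N : ℂ))⁻¹ •
        (blockD N n k * Matrix.diagonal fun i => ((Real.sqrt (μ i))⁻¹ : ℂ)))
    (lam : ℝ) (hlam : lam ≠ 0)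
    (y : Fin N → ℂ) (hy_unit : star y ⬝ᵥ y = 1)
    (hy_eig : W.mulVec y = (lam : ℂ) • y) :
    (∃ x₀ : Fin n → ℂ, y = V.mulVec x₀) ∧
      star (Vᵀ.mulVec y) ⬝ᵥ (Vᵀ.mulVec y) = 1 ∧
      Aμ.mulVec (Vᵀ.mulVec y) = ((lam / N : ℝ) : ℂ) • (Vᵀ.mulVec y) :=
  eigvec_W_to_eigvec_Amu_general N n hN μ hμpos k hk hksum A W hW Aμ hAμ V hV lam hlam y hy_unit
    hy_eig
end

section
/- For λ ≠ 0, λ is an eigenvalue of the model matrix W = D A Dᵀ of multiplicity t if and only if λ/N is an eigenvalue of A_μ = √M A √M of multiplicity t. -/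
open scoped BigOperators ComplexConjugate
open Matrix

lemma off_add_eq (n : ℕ) (k : Fin n → ℕ) (i : Fin n) :
    (∑ l : Fin n, if (l:ℕ) < (i:ℕ) then k l else 0) + k i
      = ∑ l : Fin n, if (l:ℕ) ≤ (i:ℕ) then k l else 0 := by
  have h : ∀ l : Fin n, (if (l:ℕ) ≤ (i:ℕ) then k l else 0)
      = (if (l:ℕ) < (i:ℕ) then k l else 0) + (if l = i then k l else 0) := by
    intro l
    by_cases hl : l = i
    · subst hl; simp
    · have hv : (l:ℕ) ≠ (i:ℕ) := fun h => hl (Fin.ext h)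
      have : ((l:ℕ) ≤ (i:ℕ)) ↔ ((l:ℕ) < (i:ℕ)) := by omega
      simp [hl, this]
  rw [Finset.sum_congr rfl (fun l _ => h l), Finset.sum_add_distrib,
    Finset.sum_ite_eq' Finset.univ i k]
  simp

lemma count_interval (Nn a b : ℕ) (hb : b ≤ Nn) :
    (∑ r : Fin Nn, (if a ≤ (r:ℕ) ∧ (r:ℕ) < b then (1:ℂ) else 0)) = ((b - a : ℕ) : ℂ) := by
  rw [Fin.sum_univ_eq_sum_range (fun r => if a ≤ r ∧ r < b then (1:ℂ) else 0)]
  rw [Finset.sum_boole]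
  congr 1
  have : (Finset.range Nn).filter (fun r => a ≤ r ∧ r < b) = Finset.Ico a b := by
    ext x; simp only [Finset.mem_filter, Finset.mem_range, Finset.mem_Ico]; omega
  rw [this, Nat.card_Ico]

lemma blockD_transpose_mul (N n : ℕ) (k : Fin n → ℕ) (hksum : ∑ i, k i = N) :
    (blockD N n k)ᵀ * blockD N n k = Matrix.diagonal (fun i => (k i : ℂ)) := by
  ext i j
  rw [Matrix.mul_apply]
  simp only [blockD, Matrix.transpose_apply, Matrix.of_apply]
  set s : Fin n → ℕ := fun j => ∑ l : Fin n, if (l:ℕ) < (j:ℕ) then k l else 0 with hs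
  have hterm : ∀ r : Fin N,
      (if s i ≤ (r:ℕ) ∧ (r:ℕ) < s i + k i then (1:ℂ) else 0) *
        (if s j ≤ (r:ℕ) ∧ (r:ℕ) < s j + k j then (1:ℂ) else 0)
      = (if (s i ≤ (r:ℕ) ∧ (r:ℕ) < s i + k i) ∧ (s j ≤ (r:ℕ) ∧ (r:ℕ) < s j + k j)
          then (1:ℂ) else 0) := by
    intro r
    by_cases h1 : s i ≤ (r:ℕ) ∧ (r:ℕ) < s i + k i <;>
      by_cases h2 : s j ≤ (r:ℕ) ∧ (r:ℕ) < s j + k j <;> simp [h1, h2]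
  rw [Finset.sum_congr rfl (fun r _ => hterm r)]
  have hmono : ∀ a b : Fin n, (a:ℕ) < (b:ℕ) → s a + k a ≤ s b := by
    intro a b hab
    rw [hs]
    simp only
    rw [off_add_eq]
    exact Finset.sum_le_sum fun l _ => by
      by_cases h : (l:ℕ) ≤ (a:ℕ) <;> simp [h] <;> split <;> omega
  by_cases hij : i = j
  · subst hij
    rw [Matrix.diagonal_apply_eq]
    have hb : s i + k i ≤ N := by
      rw [hs]; simp only; rw [off_add_eq, ← hksum]
      exact Finset.sum_le_sum fun l _ => by by_cases h : (l:ℕ) ≤ (i:ℕ) <;> simp [h]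
    have := count_interval N (s i) (s i + k i) hb
    simp only [and_self] at this ⊢
    rw [this]
    simp
  · rw [Matrix.diagonal_apply_ne _ hij]
    apply Finset.sum_eq_zero
    intro r _
    rw [if_neg]
    rintro ⟨⟨h1, h2⟩, h3, h4⟩
    rcases lt_or_gt_of_ne (fun h : (i:ℕ) = (j:ℕ) => hij (Fin.ext h)) with h | h
    · have := hmono i j h; omega
    · have := hmono j i h; omega

/-- for `λ ≠ 0`, `λ` is an eigenvalue of `W = D A Dᵀ` of multiplicity `t`
iff `λ/N` is an eigenvalue of `A_μ = √M A √M` of multiplicity `t` (multiplicity = dimension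
of the eigenspace). -/
theorem multiplicity_W_iff_Amu (N n : ℕ) (hN : 0 < N) (hn : 0 < n)
    (μ : Fin n → ℝ) (hμpos : ∀ i, 0 < μ i) (hμsum : ∑ i, μ i = 1)
    (k : Fin n → ℕ) (hkpos : ∀ i, 0 < k i)
    (hk : ∀ i, (k i : ℝ) = μ i * N) (hksum : ∑ i, k i = N)
    (A : Matrix (Fin n) (Fin n) ℝ) (hA : A.IsSymm)
    (W : Matrix (Fin N) (Fin N) ℂ)
    (hW : W = blockD N n k * A.map (Complex.ofReal) * (blockD N n k)ᵀ)
    (Aμ : Matrix (Fin n) (Fin n) ℂ)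
    (hAμ : Aμ = Matrix.diagonal (fun i => (Real.sqrt (μ i) : ℂ)) * A.map (Complex.ofReal) *
        Matrix.diagonal (fun i => (Real.sqrt (μ i) : ℂ)))
    (lam : ℝ) (hlam : lam ≠ 0) (t : ℕ) (ht : 0 < t) :
    (Module.End.HasEigenvalue (Matrix.toLin' W) (lam : ℂ) ∧
        Module.finrank ℂ (Module.End.eigenspace (Matrix.toLin' W) (lam : ℂ)) = t) ↔
      (Module.End.HasEigenvalue (Matrix.toLin' Aμ) ((lam / N : ℝ) : ℂ) ∧
        Module.finrank ℂ (Module.End.eigenspace (Matrix.toLin' Aμ) ((lam / N : ℝ) : ℂ)) = t) := by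
  classical
  set Dm : Matrix (Fin N) (Fin n) ℂ := blockD N n k with hDm
  set Am : Matrix (Fin n) (Fin n) ℂ := A.map Complex.ofReal with hAm
  set S : Matrix (Fin n) (Fin n) ℂ :=
    Matrix.diagonal (fun i => (Real.sqrt (μ i) : ℂ)) with hSdef
  set Si : Matrix (Fin n) (Fin n) ℂ :=
    Matrix.diagonal (fun i => ((Real.sqrt (μ i) : ℂ))⁻¹) with hSidef
  have hsq_ne : ∀ i, ((Real.sqrt (μ i) : ℂ)) ≠ 0 := by
    intro i
    simp only [ne_eq, Complex.ofReal_eq_zero]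
    exact Real.sqrt_ne_zero'.mpr (hμpos i)
  have hNne : ((N:ℂ)) ≠ 0 := Nat.cast_ne_zero.mpr hN.ne'
  have hlamC : ((lam:ℂ)) ≠ 0 := Complex.ofReal_ne_zero.mpr hlam
  -- S * Si = 1 and Si * S = 1
  have hSSi : S * Si = 1 := by
    rw [hSdef, hSidef, Matrix.diagonal_mul_diagonal]
    have : (fun i => ((Real.sqrt (μ i) : ℂ)) * ((Real.sqrt (μ i) : ℂ))⁻¹) = fun _ => (1:ℂ) :=
      funext fun i => mul_inv_cancel₀ (hsq_ne i)
    rw [this, Matrix.diagonal_one]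
  have hSiS : Si * S = 1 := by
    rw [hSdef, hSidef, Matrix.diagonal_mul_diagonal]
    have : (fun i => ((Real.sqrt (μ i) : ℂ))⁻¹ * ((Real.sqrt (μ i) : ℂ))) = fun _ => (1:ℂ) :=
      funext fun i => inv_mul_cancel₀ (hsq_ne i)
    rw [this, Matrix.diagonal_one]
  -- key: Dᵀ D = N • (S * S)
  have hKey : Dmᵀ * Dm = (N:ℂ) • (S * S) := by
    rw [hDm, blockD_transpose_mul N n k hksum, hSdef, Matrix.diagonal_mul_diagonal]
    ext a b
    rw [Matrix.smul_apply, Matrix.diagonal_apply, Matrix.diagonal_apply]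
    by_cases hab : a = b
    · subst hab
      rw [if_pos rfl, if_pos rfl, smul_eq_mul]
      have h1 : ((Real.sqrt (μ a) : ℂ)) * ((Real.sqrt (μ a) : ℂ)) = ((μ a : ℝ) : ℂ) := by
        rw [← Complex.ofReal_mul, Real.mul_self_sqrt (hμpos a).le]
      rw [h1]
      calc ((k a : ℕ) : ℂ) = ((k a : ℝ) : ℂ) := by push_cast; ring
        _ = ((μ a * N : ℝ) : ℂ) := by rw [hk a]
        _ = (N:ℂ) * ((μ a : ℝ) : ℂ) := by push_cast; ring
    · rw [if_neg hab, if_neg hab, smul_zero]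
  -- convenient cancellation forms
  have cancel1 : ∀ (X : Matrix (Fin n) (Fin N) ℂ), Si * (S * X) = X := by
    intro X; rw [← Matrix.mul_assoc, hSiS, Matrix.one_mul]
  have cancel2 : ∀ (X : Matrix (Fin n) (Fin N) ℂ), S * (Si * X) = X := by
    intro X; rw [← Matrix.mul_assoc, hSSi, Matrix.one_mul]
  have cancel1' : ∀ (X : Matrix (Fin n) (Fin n) ℂ), Si * (S * X) = X := by
    intro X; rw [← Matrix.mul_assoc, hSiS, Matrix.one_mul]
  have keyX : ∀ (X : Matrix (Fin n) (Fin N) ℂ),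
      Dmᵀ * (Dm * X) = (N:ℂ) • (S * (S * X)) := by
    intro X
    rw [← Matrix.mul_assoc, hKey, Matrix.smul_mul, Matrix.mul_assoc]
  have keyX' : ∀ (X : Matrix (Fin n) (Fin n) ℂ),
      Dmᵀ * (Dm * X) = (N:ℂ) • (S * (S * X)) := by
    intro X
    rw [← Matrix.mul_assoc, hKey, Matrix.smul_mul, Matrix.mul_assoc]
  -- the four identities
  have I1 : Aμ * (Si * Dmᵀ) = (N:ℂ)⁻¹ • ((Si * Dmᵀ) * W) := by
    rw [hAμ, hW]
    rw [Matrix.mul_assoc, Matrix.mul_assoc (Si) (Dmᵀ)]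
    rw [Matrix.mul_assoc Dm Am Dmᵀ, keyX (Am * Dmᵀ), Matrix.mul_smul, cancel1,
      smul_smul, inv_mul_cancel₀ hNne, one_smul]
    rw [Matrix.mul_assoc S Am (S * (Si * Dmᵀ)), cancel2]
  have I2 : W * (Dm * Am * S) = (Dm * Am * S) * ((N:ℂ) • Aμ) := by
    rw [hW, hAμ]
    rw [Matrix.mul_smul]
    simp only [Matrix.mul_assoc]
    rw [keyX' (Am * S), Matrix.mul_smul, Matrix.mul_smul]
  have I3 : (Si * Dmᵀ) * (Dm * Am * S) = (N:ℂ) • Aμ := by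
    rw [hAμ]
    simp only [Matrix.mul_assoc]
    rw [keyX' (Am * S), Matrix.mul_smul, cancel1']
  have I4 : (Dm * Am * S) * (Si * Dmᵀ) = W := by
    rw [hW]
    simp only [Matrix.mul_assoc]
    rw [cancel2]
  -- cast fact
  have hcast : (((lam / (N:ℝ)) : ℝ) : ℂ) = (lam:ℂ) * ((N:ℂ))⁻¹ := by
    push_cast; ring
  -- eigenspaces
  set E₁ := Module.End.eigenspace (Matrix.toLin' W) ((lam:ℝ) : ℂ) with hE1
  set E₂ := Module.End.eigenspace (Matrix.toLin' Aμ) ((lam / N : ℝ) : ℂ) with hE2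
  set F0 : (Fin N → ℂ) →ₗ[ℂ] (Fin n → ℂ) := Matrix.toLin' (Si * Dmᵀ) with hF0
  set G0 : (Fin n → ℂ) →ₗ[ℂ] (Fin N → ℂ) :=
    ((lam:ℂ))⁻¹ • Matrix.toLin' (Dm * Am * S) with hG0
  have hF : ∀ x ∈ E₁, F0 x ∈ E₂ := by
    intro x hx
    rw [hE1, Module.End.mem_eigenspace_iff] at hx
    rw [Matrix.toLin'_apply] at hx
    rw [hE2, Module.End.mem_eigenspace_iff, hF0, Matrix.toLin'_apply, Matrix.toLin'_apply,
      Matrix.mulVec_mulVec, I1, Matrix.smul_mulVec, ← Matrix.mulVec_mulVec, hx,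
      Matrix.mulVec_smul, hcast, smul_smul, mul_comm]
  have hG : ∀ u ∈ E₂, G0 u ∈ E₁ := by
    intro u hu
    rw [hE2, Module.End.mem_eigenspace_iff, Matrix.toLin'_apply] at hu
    rw [hE1, Module.End.mem_eigenspace_iff]
    rw [hG0]
    simp only [LinearMap.smul_apply, Matrix.toLin'_apply, Matrix.mulVec_smul,
      Matrix.mulVec_mulVec]
    rw [I2, ← Matrix.mulVec_mulVec, Matrix.smul_mulVec, hu, hcast, Matrix.mulVec_smul]
    simp only [Matrix.mulVec_smul, smul_smul]
    congr 1
    field_simp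
  have hGF : ∀ x ∈ E₁, G0 (F0 x) = x := by
    intro x hx
    rw [hE1, Module.End.mem_eigenspace_iff, Matrix.toLin'_apply] at hx
    rw [hG0, hF0]
    simp only [LinearMap.smul_apply, Matrix.toLin'_apply, Matrix.mulVec_mulVec]
    rw [I4, hx, smul_smul, inv_mul_cancel₀ hlamC, one_smul]
  have hFG : ∀ u ∈ E₂, F0 (G0 u) = u := by
    intro u hu
    rw [hE2, Module.End.mem_eigenspace_iff, Matrix.toLin'_apply] at hu
    rw [hG0, hF0]
    simp only [LinearMap.smul_apply, Matrix.toLin'_apply, Matrix.mulVec_smul,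
      Matrix.mulVec_mulVec]
    rw [I3, Matrix.smul_mulVec, hu, hcast]
    simp only [Matrix.mulVec_smul, smul_smul]
    convert one_smul ℂ u using 2
    field_simp
  -- the equivalence of eigenspaces
  have e : E₁ ≃ₗ[ℂ] E₂ :=
    LinearEquiv.ofLinear (F0.restrict hF) (G0.restrict hG)
      (LinearMap.ext fun u => Subtype.ext (by
        simp only [LinearMap.coe_comp, Function.comp_apply, LinearMap.restrict_apply,
          LinearMap.id_coe, id_eq]
        exact hFG u u.2))
      (LinearMap.ext fun x => Subtype.ext (by
        simp only [LinearMap.coe_comp, Function.comp_apply, LinearMap.restrict_apply,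
          LinearMap.id_coe, id_eq]
        exact hGF x x.2))
  have hrank : Module.finrank ℂ E₁ = Module.finrank ℂ E₂ := e.finrank_eq
  constructor
  · rintro ⟨h1, h2⟩
    have ht2 : Module.finrank ℂ E₂ = t := by rw [← hrank]; exact h2
    refine ⟨?_, ht2⟩
    rw [Module.End.hasEigenvalue_iff]
    intro hb
    rw [← hE2] at hb
    rw [hb, finrank_bot] at ht2
    omega
  · rintro ⟨h1, h2⟩
    have ht1 : Module.finrank ℂ E₁ = t := by rw [hrank]; exact h2
    refine ⟨?_, ht1⟩
    rw [Module.End.hasEigenvalue_iff]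
    intro hb
    rw [← hE1] at hb
    rw [hb, finrank_bot] at ht1
    omega
end

section
/- Let A be a Cayley matrix on a finite abelian group G of order n with connection function f, and let W = D A Dᵀ be the model matrix of SBM(A, μ, N) with uniform measure μ_i = 1/n (so each block has size N/n). Then for every character χ of G, the vector (1/√N) D χ is a unit eigenvector of W with eigenvalue (N/n) Σ_{x∈G} f(x) conj(χ(x)), and the set {(1/√N) D χ : χ ∈ Ĝ} is orthonormal. -/
open scoped BigOperators ComplexConjugate
open Matrix

/-!
With blocks of equal size `m = N / n`, the columns of `D` are orthogonal with `Dᵀ D = m • 1`, so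
`W (D v) = m • D (A v)` and `⟪D u, D v⟫ = m ⟪u, v⟫`. A Cayley matrix multiplies each character `χ`
by `∑ f(y) χ(y)`, which equals `∑ f(x) conj(χ(x))` because `f` is inverse-invariant and `|χ| = 1`.
Orthonormality is then the orthogonality of characters.
-/

section Blocks

variable {n m : ℕ}

theorem Fin.sum_comp_divNat {M : Type*} [AddCommMonoid M] (F : Fin n → M) :
    ∑ r : Fin (n * m), F r.divNat = m • ∑ j, F j := by
  refine (finProdFinEquiv.symm.sum_comp (fun p => F p.1)).trans ?_
  simp [Fintype.sum_prod_type, Finset.smul_sum]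

theorem blockD_apply (r : Fin (n * m)) (j : Fin n) :
    blockD (n * m) n (fun _ => m) r j = if r.divNat = j then 1 else 0 := by
  have hm : 0 < m := Nat.pos_of_mul_pos_left (Fin.pos r)
  have hstart : (∑ i : Fin n, if (i : ℕ) < (j : ℕ) then m else 0) = j * m := by
    simp [Finset.sum_ite, Fin.val_fin_lt, Finset.filter_gt_eq_Iio]
  have hblock : (j * m ≤ (r : ℕ) ∧ (r : ℕ) < j * m + m) ↔ r.divNat = j := by
    rw [Fin.ext_iff, Fin.coe_divNat, Nat.div_eq_iff hm]
    omega
  simp only [blockD, of_apply, hstart, hblock]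

theorem blockD_mulVec (u : Fin n → ℂ) :
    blockD (n * m) n (fun _ => m) *ᵥ u = fun r => u r.divNat := by
  ext r
  simp [mulVec, dotProduct, blockD_apply]

theorem blockD_transpose_mul_blockD_s11 :
    (blockD (n * m) n (fun _ => m))ᵀ * blockD (n * m) n (fun _ => m) = (m : ℂ) • 1 := by
  ext i j
  simp only [mul_apply, transpose_apply, blockD_apply, ite_mul, one_mul, zero_mul]
  rw [Fin.sum_comp_divNat (fun k => if k = i then if k = j then (1 : ℂ) else 0 else 0)]
  simp [one_apply, eq_comm]

theorem star_blockD_mulVec_dotProduct (u v : Fin n → ℂ) :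
    star (blockD (n * m) n (fun _ => m) *ᵥ u) ⬝ᵥ (blockD (n * m) n (fun _ => m) *ᵥ v) =
      m * (star u ⬝ᵥ v) := by
  simp only [blockD_mulVec, dotProduct, Pi.star_apply]
  rw [Fin.sum_comp_divNat (fun j => star (u j) * v j), nsmul_eq_mul]

theorem blockD_mul_mul_transpose_mulVec_blockD_mulVec (A : Matrix (Fin n) (Fin n) ℂ)
    (u : Fin n → ℂ) :
    (blockD (n * m) n (fun _ => m) * A * (blockD (n * m) n (fun _ => m))ᵀ) *ᵥ
        (blockD (n * m) n (fun _ => m) *ᵥ u) =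
      (m : ℂ) • blockD (n * m) n (fun _ => m) *ᵥ (A *ᵥ u) := by
  rw [mulVec_mulVec, Matrix.mul_assoc, blockD_transpose_mul_blockD_s11, Matrix.mul_smul,
    Matrix.mul_one, smul_mulVec, mulVec_mulVec]

end Blocks

theorem star_inv_sqrt_smul_dotProduct_inv_sqrt_smul {ι : Type*} [Fintype ι] {x : ℝ} (hx : 0 ≤ x)
    (u v : ι → ℂ) :
    star ((Real.sqrt x : ℂ)⁻¹ • u) ⬝ᵥ ((Real.sqrt x : ℂ)⁻¹ • v) = (x : ℂ)⁻¹ * (star u ⬝ᵥ v) := by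
  rw [star_smul, smul_dotProduct, dotProduct_smul, smul_eq_mul, smul_eq_mul, ← mul_assoc,
    Complex.star_def, map_inv₀, Complex.conj_ofReal, ← mul_inv, ← Complex.ofReal_mul,
    Real.mul_self_sqrt hx]

section Cayley

variable {ι G R : Type*} [Fintype ι] [Group G] [Fintype G] [CommSemiring R]

theorem cayley_mulVec_monoidHom (g : ι ≃ G) (f : G → R) (A : Matrix ι ι R)
    (hA : ∀ i j, A i j = f ((g i)⁻¹ * g j)) (χ : G →* R) :
    A *ᵥ (fun i => χ (g i)) = (∑ y, f y * χ y) • fun i => χ (g i) := by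
  ext i
  calc (A *ᵥ fun i => χ (g i)) i = ∑ x, f ((g i)⁻¹ * x) * χ x := by
        simp only [mulVec, dotProduct, hA]
        exact g.sum_comp (fun x => f ((g i)⁻¹ * x) * χ x)
    _ = ∑ y, f y * χ (g i * y) :=
        (Equiv.sum_comp (Equiv.mulLeft (g i)) _).symm.trans (by simp)
    _ = ((∑ y, f y * χ y) • fun i => χ (g i)) i := by
        simp only [map_mul, Pi.smul_apply, smul_eq_mul, Finset.sum_mul]
        exact Finset.sum_congr rfl fun y _ => by ring

end Cayley

section Characters

variable {G : Type*} [Group G] {χ : G →* ℂ}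

theorem conj_apply_of_norm_eq_one (hχ : ∀ x, ‖χ x‖ = 1) (x : G) : conj (χ x) = χ x⁻¹ := by
  rw [map_inv, Complex.inv_eq_conj (hχ x)]

variable [Fintype G]

theorem sum_mul_conj_of_inv_invariant (hχ : ∀ x, ‖χ x‖ = 1) (f : G → ℝ)
    (hf : ∀ x, f x = f x⁻¹) : ∑ x, (f x : ℂ) * conj (χ x) = ∑ x, (f x : ℂ) * χ x := by
  refine Fintype.sum_equiv (Equiv.inv G) _ _ fun x => ?_
  simp [conj_apply_of_norm_eq_one hχ, ← hf]

theorem sum_conj_mul_self (hχ : ∀ x, ‖χ x‖ = 1) :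
    ∑ x, conj (χ x) * χ x = Fintype.card G := by
  simp [Complex.conj_mul', hχ]

theorem sum_conj_mul_eq_zero (hχ : ∀ x, ‖χ x‖ = 1) {ψ : G →* ℂ} (hne : χ ≠ ψ) :
    ∑ x, conj (χ x) * ψ x = 0 := by
  refine sum_hom_units_eq_zero ((starRingEnd ℂ).toMonoidHom.comp χ * ψ) fun h => hne ?_
  ext x
  have h1 : conj (χ x) * ψ x = 1 := DFunLike.congr_fun h x
  have h2 : conj (χ x) * χ x = 1 := by simp [Complex.conj_mul', hχ]
  exact mul_left_cancel₀ (left_ne_zero_of_mul_eq_one h2) (h2.trans h1.symm)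

end Characters

theorem cayley_uniform_SBM_eigenvectors_general
    (n N : ℕ) (hN : 0 < N) (hdvd : n ∣ N)
    (G : Type*) [CommGroup G] [Fintype G]
    (g : Fin n ≃ G)
    (f : G → ℝ) (hf : ∀ x : G, f x = f x⁻¹)
    (A : Matrix (Fin n) (Fin n) ℂ)
    (hA : ∀ i j, A i j = (f ((g i)⁻¹ * g j) : ℂ))
    (W : Matrix (Fin N) (Fin N) ℂ)
    (hW : W = blockD N n (fun _ => N / n) * A * (blockD N n (fun _ => N / n))ᵀ) :
    ∀ χ ψ : G →* ℂ, (∀ x : G, ‖χ x‖ = 1) → (∀ x : G, ‖ψ x‖ = 1) →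
      (W.mulVec (((Real.sqrt N : ℂ))⁻¹ • (blockD N n (fun _ => N / n)).mulVec
            (fun i => χ (g i))) =
          (((N : ℂ) / n) * ∑ x : G, (f x : ℂ) * conj (χ x)) •
            (((Real.sqrt N : ℂ))⁻¹ • (blockD N n (fun _ => N / n)).mulVec
              (fun i => χ (g i)))) ∧
      (star (((Real.sqrt N : ℂ))⁻¹ • (blockD N n (fun _ => N / n)).mulVec
            (fun i => χ (g i))) ⬝ᵥ
          (((Real.sqrt N : ℂ))⁻¹ • (blockD N n (fun _ => N / n)).mulVec
            (fun i => χ (g i))) = 1) ∧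
      (χ ≠ ψ →
        star (((Real.sqrt N : ℂ))⁻¹ • (blockD N n (fun _ => N / n)).mulVec
            (fun i => χ (g i))) ⬝ᵥ
          (((Real.sqrt N : ℂ))⁻¹ • (blockD N n (fun _ => N / n)).mulVec
            (fun i => ψ (g i))) = 0) := by
  intro χ ψ hχ _
  obtain ⟨m, rfl⟩ := hdvd
  have hn : 0 < n := Nat.pos_of_mul_pos_right hN
  rw [Nat.mul_div_cancel_left m hn] at hW ⊢
  subst hW
  set D := blockD (n * m) n (fun _ => m)
  have hdot : ∀ ψ : G →* ℂ, star (D *ᵥ fun i => χ (g i)) ⬝ᵥ (D *ᵥ fun i => ψ (g i)) =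
      m * ∑ x, conj (χ x) * ψ x := by
    intro ψ
    rw [star_blockD_mulVec_dotProduct]
    exact congrArg _ (g.sum_comp fun x => conj (χ x) * ψ x)
  have hratio : ((n * m : ℕ) : ℂ) / n = m := by
    rw [Nat.cast_mul, mul_div_cancel_left₀ _ (Nat.cast_ne_zero.2 hn.ne')]
  refine ⟨?_, ?_, fun hne => ?_⟩
  · rw [mulVec_smul, blockD_mul_mul_transpose_mulVec_blockD_mulVec,
      cayley_mulVec_monoidHom g (fun x => (f x : ℂ)) A hA χ, sum_mul_conj_of_inv_invariant hχ f hf,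
      mulVec_smul, smul_smul, smul_smul, smul_smul, hratio]
    congr 1
    ring
  · rw [star_inv_sqrt_smul_dotProduct_inv_sqrt_smul (Nat.cast_nonneg _),
      Complex.ofReal_natCast, hdot, sum_conj_mul_self hχ, Fintype.card_congr g.symm,
      Fintype.card_fin, mul_comm (m : ℂ), ← Nat.cast_mul,
      inv_mul_cancel₀ (Nat.cast_ne_zero.2 hN.ne')]
  · rw [star_inv_sqrt_smul_dotProduct_inv_sqrt_smul (Nat.cast_nonneg _),
      Complex.ofReal_natCast, hdot, sum_conj_mul_eq_zero hχ hne, mul_zero, mul_zero]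

/-- for a Cayley matrix `A` on a finite abelian group `G` of order `n`, and
`W = D A Dᵀ` the model matrix of the SBM with uniform block sizes `N/n`, every vector
`(1/√N) D χ` (for `χ` a character of `G`) is a unit eigenvector of `W` with eigenvalue
`(N/n) ∑_x f(x) conj(χ(x))`, and these vectors form an orthonormal set. -/
theorem cayley_uniform_SBM_eigenvectors
    (n N : ℕ) (hn : 0 < n) (hN : 0 < N) (hdvd : n ∣ N)
    (G : Type*) [CommGroup G] [Fintype G] [DecidableEq G]
    (g : Fin n ≃ G)
    (f : G → ℝ) (hf : ∀ x : G, f x = f x⁻¹)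
    (A : Matrix (Fin n) (Fin n) ℂ)
    (hA : ∀ i j, A i j = (f ((g i)⁻¹ * g j) : ℂ))
    (W : Matrix (Fin N) (Fin N) ℂ)
    (hW : W = blockD N n (fun _ => N / n) * A * (blockD N n (fun _ => N / n))ᵀ) :
    ∀ χ ψ : G →* ℂ, (∀ x : G, ‖χ x‖ = 1) → (∀ x : G, ‖ψ x‖ = 1) →
      (W.mulVec (((Real.sqrt N : ℂ))⁻¹ • (blockD N n (fun _ => N / n)).mulVec
            (fun i => χ (g i))) =
          (((N : ℂ) / n) * ∑ x : G, (f x : ℂ) * conj (χ x)) •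
            (((Real.sqrt N : ℂ))⁻¹ • (blockD N n (fun _ => N / n)).mulVec
              (fun i => χ (g i)))) ∧
      (star (((Real.sqrt N : ℂ))⁻¹ • (blockD N n (fun _ => N / n)).mulVec
            (fun i => χ (g i))) ⬝ᵥ
          (((Real.sqrt N : ℂ))⁻¹ • (blockD N n (fun _ => N / n)).mulVec
            (fun i => χ (g i))) = 1) ∧
      (χ ≠ ψ →
        star (((Real.sqrt N : ℂ))⁻¹ • (blockD N n (fun _ => N / n)).mulVec
            (fun i => χ (g i))) ⬝ᵥ
          (((Real.sqrt N : ℂ))⁻¹ • (blockD N n (fun _ => N / n)).mulVec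
            (fun i => ψ (g i))) = 0) :=
  cayley_uniform_SBM_eigenvectors_general n N hN hdvd G g f hf A hA W hW
end

section
/- With μ' = μ(1+ε_i) componentwise, |ε_i| ≤ ε ≤ 1, and A a symmetric n×n matrix with entries in [0,1], the weighted matrices A_μ = √M A √M and A_{μ'} = √M' A √M' satisfy ‖A_{μ'} − A_μ‖_op ≤ 2εn‖A_μ‖_op. -/
/-!
Since `μ'_i = μ_i (1 + ε_i)`, the difference `A_{μ'} - A_μ` is the Hadamard product of `A_μ`
with `E_{ij} = √(1 + ε_i) √(1 + ε_j) - 1`, and `|E_{ij}| ≤ ε`. Hence its Frobenius norm is at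
most `ε ‖A_μ‖_F`. The operator norm is bounded by the Frobenius norm, while `‖A_μ‖_F²` is the sum
of the `n` squared column norms of `A_μ`, each at most `‖A_μ‖_op²`. This gives
`‖A_{μ'} - A_μ‖_op ≤ ε √n ‖A_μ‖_op`, and `√n ≤ 2n`.
-/

open scoped BigOperators
open Matrix

/-- The `ℓ² → ℓ²` operator norm of a real matrix. -/
noncomputable def opNorm {m n : ℕ} (A : Matrix (Fin m) (Fin n) ℝ) : ℝ :=
  ‖LinearMap.toContinuousLinearMap (Matrix.toEuclideanLin A)‖

lemma opNorm_nonneg {m n : ℕ} (A : Matrix (Fin m) (Fin n) ℝ) : 0 ≤ opNorm A :=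
  norm_nonneg _

lemma norm_toEuclideanLin_sq {m n : ℕ} (A : Matrix (Fin m) (Fin n) ℝ)
    (x : EuclideanSpace ℝ (Fin n)) :
    ‖toEuclideanLin A x‖ ^ 2 = ∑ i, (A *ᵥ x.ofLp) i ^ 2 := by
  simp [EuclideanSpace.norm_sq_eq]

lemma opNorm_le_sqrt_sum_sq {m n : ℕ} (A : Matrix (Fin m) (Fin n) ℝ) :
    opNorm A ≤ √(∑ i, ∑ j, A i j ^ 2) := by
  refine ContinuousLinearMap.opNorm_le_bound _ (Real.sqrt_nonneg _) fun x => ?_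
  rw [← Real.sqrt_sq (norm_nonneg _), ← Real.sqrt_sq (norm_nonneg x),
    ← Real.sqrt_mul (by positivity)]
  refine Real.sqrt_le_sqrt ?_
  rw [LinearMap.coe_toContinuousLinearMap', norm_toEuclideanLin_sq, EuclideanSpace.norm_sq_eq,
    Finset.sum_mul]
  refine Finset.sum_le_sum fun i _ => ?_
  simpa [mulVec, dotProduct] using Finset.sum_mul_sq_le_sq_mul_sq _ (A i) x.ofLp

lemma sum_sq_col_le_opNorm_sq {m n : ℕ} (A : Matrix (Fin m) (Fin n) ℝ) (j : Fin n) :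
    ∑ i, A i j ^ 2 ≤ opNorm A ^ 2 := by
  have h := (toEuclideanLin A).toContinuousLinearMap.le_opNorm (EuclideanSpace.single j 1)
  simpa [opNorm, norm_toEuclideanLin_sq, mulVec_single_one]
    using pow_le_pow_left₀ (norm_nonneg _) h 2

lemma sum_sq_le_card_mul_opNorm_sq {m n : ℕ} (A : Matrix (Fin m) (Fin n) ℝ) :
    ∑ i, ∑ j, A i j ^ 2 ≤ n * opNorm A ^ 2 := by
  rw [Finset.sum_comm]
  simpa using Finset.sum_le_sum fun j (_ : j ∈ Finset.univ) => sum_sq_col_le_opNorm_sq A j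

lemma opNorm_le_of_abs_apply_le {m n : ℕ} {B C : Matrix (Fin m) (Fin n) ℝ} {c : ℝ} (hc : 0 ≤ c)
    (h : ∀ i j, |B i j| ≤ c * |C i j|) : opNorm B ≤ c * √n * opNorm C := by
  have hsq : ∑ i, ∑ j, B i j ^ 2 ≤ c ^ 2 * (n * opNorm C ^ 2) :=
    calc ∑ i, ∑ j, B i j ^ 2 ≤ ∑ i, ∑ j, c ^ 2 * C i j ^ 2 := by
          gcongr with i _ j _
          rw [← sq_abs, ← sq_abs (C i j), ← mul_pow]
          exact pow_le_pow_left₀ (abs_nonneg _) (h i j) 2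
      _ = c ^ 2 * ∑ i, ∑ j, C i j ^ 2 := by simp only [Finset.mul_sum]
      _ ≤ c ^ 2 * (n * opNorm C ^ 2) := by gcongr; exact sum_sq_le_card_mul_opNorm_sq C
  calc opNorm B ≤ √(∑ i, ∑ j, B i j ^ 2) := opNorm_le_sqrt_sum_sq B
    _ ≤ √(c ^ 2 * (n * opNorm C ^ 2)) := Real.sqrt_le_sqrt hsq
    _ = c * √n * opNorm C := by
      rw [Real.sqrt_mul (sq_nonneg _), Real.sqrt_mul n.cast_nonneg, Real.sqrt_sq hc,
        Real.sqrt_sq (opNorm_nonneg C), mul_assoc]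

lemma abs_sqrt_mul_sqrt_sub_one_le {a b ε : ℝ} (hε : ε ≤ 1) (ha : |a| ≤ ε) (hb : |b| ≤ ε) :
    |√(1 + a) * √(1 + b) - 1| ≤ ε := by
  obtain ⟨ha₁, ha₂⟩ := abs_le.1 ha
  obtain ⟨hb₁, hb₂⟩ := abs_le.1 hb
  rw [← Real.sqrt_mul (by linarith), abs_sub_le_iff, sub_le_iff_le_add', sub_le_comm]
  constructor
  · rw [Real.sqrt_le_left (by linarith)]
    nlinarith
  · rw [Real.le_sqrt (by linarith) (by nlinarith)]
    nlinarith

lemma sqrt_weighted_sub_apply {ι : Type*} [Fintype ι] [DecidableEq ι] {w w' e : ι → ℝ}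
    (hw' : ∀ i, w' i = w i * (1 + e i)) (he : ∀ i, 0 ≤ 1 + e i) (A : Matrix ι ι ℝ) (i j : ι) :
    (diagonal (fun i => √(w' i)) * A * diagonal (fun i => √(w' i)) -
        diagonal (fun i => √(w i)) * A * diagonal (fun i => √(w i))) i j =
      (diagonal (fun i => √(w i)) * A * diagonal (fun i => √(w i))) i j *
        (√(1 + e i) * √(1 + e j) - 1) := by
  simp only [Matrix.sub_apply, mul_diagonal, diagonal_mul, hw', Real.sqrt_mul' _ (he _)]
  ring

theorem Amu_perturbation_bound_general (n : ℕ) (hn : 0 < n)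
    (μ μ' : Fin n → ℝ)
    (ε : ℝ) (hε1 : ε ≤ 1) (εi : Fin n → ℝ) (hεi : ∀ i, |εi i| ≤ ε)
    (hμ' : ∀ i, μ' i = μ i * (1 + εi i))
    (A : Matrix (Fin n) (Fin n) ℝ)
    (Aμ Aμ' : Matrix (Fin n) (Fin n) ℝ)
    (hAμ : Aμ = Matrix.diagonal (fun i => Real.sqrt (μ i)) * A *
        Matrix.diagonal (fun i => Real.sqrt (μ i)))
    (hAμ' : Aμ' = Matrix.diagonal (fun i => Real.sqrt (μ' i)) * A *
        Matrix.diagonal (fun i => Real.sqrt (μ' i))) :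
    opNorm (Aμ' - Aμ) ≤ 2 * ε * n * opNorm Aμ := by
  have hε : 0 ≤ ε := (abs_nonneg _).trans (hεi ⟨0, hn⟩)
  have hentry : ∀ i j, |(Aμ' - Aμ) i j| ≤ ε * |Aμ i j| := by
    intro i j
    have he : ∀ k, 0 ≤ 1 + εi k := fun k => by linarith [neg_abs_le (εi k), hεi k]
    rw [hAμ', hAμ, sqrt_weighted_sub_apply hμ' he, abs_mul, mul_comm]
    exact mul_le_mul_of_nonneg_right (abs_sqrt_mul_sqrt_sub_one_le hε1 (hεi i) (hεi j))
      (abs_nonneg _)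
  have hsqrt : √(n : ℝ) ≤ n :=
    (Real.sqrt_le_left n.cast_nonneg).2 (by exact_mod_cast Nat.le_self_pow two_ne_zero n)
  have hnorm : 0 ≤ ε * n * opNorm Aμ := by have := opNorm_nonneg Aμ; positivity
  calc opNorm (Aμ' - Aμ) ≤ ε * √n * opNorm Aμ := opNorm_le_of_abs_apply_le hε hentry
    _ ≤ ε * n * opNorm Aμ := by gcongr; exact opNorm_nonneg Aμ
    _ ≤ 2 * ε * n * opNorm Aμ := by linarith

/-- with `μ'_i = μ_i (1 + ε_i)`, `|ε_i| ≤ ε ≤ 1`, and `A` symmetric with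
entries in `[0,1]`, the weighted matrices satisfy `‖A_{μ'} - A_μ‖_op ≤ 2 ε n ‖A_μ‖_op`. -/
theorem Amu_perturbation_bound (n : ℕ) (hn : 0 < n)
    (μ μ' : Fin n → ℝ) (hμpos : ∀ i, 0 < μ i) (hμ'pos : ∀ i, 0 < μ' i)
    (hμsum : ∑ i, μ i = 1) (hμ'sum : ∑ i, μ' i = 1)
    (ε : ℝ) (hε1 : ε ≤ 1) (εi : Fin n → ℝ) (hεi : ∀ i, |εi i| ≤ ε)
    (hμ' : ∀ i, μ' i = μ i * (1 + εi i))
    (A : Matrix (Fin n) (Fin n) ℝ) (hA : A.IsSymm)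
    (hA01 : ∀ i j, 0 ≤ A i j ∧ A i j ≤ 1)
    (Aμ Aμ' : Matrix (Fin n) (Fin n) ℝ)
    (hAμ : Aμ = Matrix.diagonal (fun i => Real.sqrt (μ i)) * A *
        Matrix.diagonal (fun i => Real.sqrt (μ i)))
    (hAμ' : Aμ' = Matrix.diagonal (fun i => Real.sqrt (μ' i)) * A *
        Matrix.diagonal (fun i => Real.sqrt (μ' i))) :
    opNorm (Aμ' - Aμ) ≤ 2 * ε * n * opNorm Aμ :=
  Amu_perturbation_bound_general n hn μ μ' ε hε1 εi hεi hμ' A Aμ Aμ' hAμ hAμ'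
end

section
/- Let E and E' be d-dimensional subspaces of ℝⁿ spanned by orthonormal vectors {x_r,...,x_s} and {x'_r,...,x'_s} respectively, and let V : ℝⁿ → ℝᴺ and V' : ℝⁿ → ℝᴺ be isometries. Let P, P' be the orthogonal projections onto V(E) and V'(E'). Then ‖P − P'‖_op ≤ ‖P_E − P_{E'}‖_op + 2‖V − V'‖_op, where P_E, P_{E'} are the projections in ℝⁿ onto E, E'. -/
open Matrix

open scoped Matrix.Norms.L2Operator in
lemma opNorm_eq {m n : ℕ} (A : Matrix (Fin m) (Fin n) ℝ) : opNorm A = ‖A‖ := rfl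

open scoped Matrix.Norms.L2Operator in
lemma l2_norm_one_le (n : ℕ) : ‖(1 : Matrix (Fin n) (Fin n) ℝ)‖ ≤ 1 := by
  rw [Matrix.cstar_norm_def, _root_.map_one]
  exact ContinuousLinearMap.norm_id_le

open scoped Matrix.Norms.L2Operator in
lemma l2_norm_isometry_le {N n : ℕ} (V : Matrix (Fin N) (Fin n) ℝ) (hV : Vᵀ * V = 1) :
    ‖V‖ ≤ 1 := by
  have h1 : ‖Vᴴ * V‖ = ‖V‖ * ‖V‖ := Matrix.l2_opNorm_conjTranspose_mul_self V
  rw [Matrix.conjTranspose_eq_transpose_of_trivial, hV] at h1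
  have h2 := l2_norm_one_le n
  nlinarith [norm_nonneg V]

open scoped Matrix.Norms.L2Operator in
lemma l2_norm_proj_le {n : ℕ} (P : Matrix (Fin n) (Fin n) ℝ)
    (hs : P.IsSymm) (hi : P * P = P) : ‖P‖ ≤ 1 := by
  have h1 : ‖Pᴴ * P‖ = ‖P‖ * ‖P‖ := Matrix.l2_opNorm_conjTranspose_mul_self P
  rw [Matrix.conjTranspose_eq_transpose_of_trivial, hs, hi] at h1
  nlinarith [norm_nonneg P]

open scoped Matrix.Norms.L2Operator in
/-- for isometries `V, V' : ℝⁿ → ℝᴺ` and orthogonal projections `P_E, P_{E'}`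
in `ℝⁿ`, the projections `P = V P_E Vᵀ` and `P' = V' P_{E'} V'ᵀ` (onto `V(E)` and `V'(E')`)
satisfy `‖P - P'‖_op ≤ ‖P_E - P_{E'}‖_op + 2 ‖V - V'‖_op`. -/
theorem projection_transfer_perturbation (N n : ℕ) (hn : 0 < n) (hnN : n ≤ N)
    (V V' : Matrix (Fin N) (Fin n) ℝ)
    (hV : Vᵀ * V = 1) (hV' : V'ᵀ * V' = 1)
    (PE PE' : Matrix (Fin n) (Fin n) ℝ)
    (hPE_symm : PE.IsSymm) (hPE_idem : PE * PE = PE)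
    (hPE'_symm : PE'.IsSymm) (hPE'_idem : PE' * PE' = PE') :
    opNorm (V * PE * Vᵀ - V' * PE' * V'ᵀ) ≤ opNorm (PE - PE') + 2 * opNorm (V - V') := by
  simp only [opNorm_eq]
  have key : V * PE * Vᵀ - V' * PE' * V'ᵀ =
      (V - V') * (PE * Vᵀ) + V' * (PE - PE') * Vᵀ + V' * PE' * (V - V')ᵀ := by
    simp only [Matrix.transpose_sub, sub_mul, mul_sub, Matrix.mul_assoc]
    simp only [Matrix.sub_mul, Matrix.mul_sub]
    abel
  have hVn : ‖V‖ ≤ 1 := l2_norm_isometry_le V hV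
  have hV'n : ‖V'‖ ≤ 1 := l2_norm_isometry_le V' hV'
  have hVtn : ‖Vᵀ‖ ≤ 1 := by
    rw [← Matrix.conjTranspose_eq_transpose_of_trivial, Matrix.l2_opNorm_conjTranspose]
    exact hVn
  have hPEn : ‖PE‖ ≤ 1 := l2_norm_proj_le PE hPE_symm hPE_idem
  have hPE'n : ‖PE'‖ ≤ 1 := l2_norm_proj_le PE' hPE'_symm hPE'_idem
  have hDt : ‖(V - V')ᵀ‖ = ‖V - V'‖ := by
    rw [← Matrix.conjTranspose_eq_transpose_of_trivial, Matrix.l2_opNorm_conjTranspose]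
  have hd : (0:ℝ) ≤ ‖V - V'‖ := norm_nonneg _
  have t1 : ‖(V - V') * (PE * Vᵀ)‖ ≤ ‖V - V'‖ := by
    calc ‖(V - V') * (PE * Vᵀ)‖ ≤ ‖V - V'‖ * ‖PE * Vᵀ‖ := Matrix.l2_opNorm_mul _ _
      _ ≤ ‖V - V'‖ * (‖PE‖ * ‖Vᵀ‖) :=
        mul_le_mul_of_nonneg_left (Matrix.l2_opNorm_mul _ _) hd
      _ ≤ ‖V - V'‖ * 1 := by
        refine mul_le_mul_of_nonneg_left ?_ hd
        exact mul_le_one₀ hPEn (norm_nonneg _) hVtn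
      _ = ‖V - V'‖ := mul_one _
  have t2 : ‖V' * (PE - PE') * Vᵀ‖ ≤ ‖PE - PE'‖ := by
    calc ‖V' * (PE - PE') * Vᵀ‖ ≤ ‖V' * (PE - PE')‖ * ‖Vᵀ‖ := Matrix.l2_opNorm_mul _ _
      _ ≤ (‖V'‖ * ‖PE - PE'‖) * ‖Vᵀ‖ :=
        mul_le_mul_of_nonneg_right (Matrix.l2_opNorm_mul _ _) (norm_nonneg _)
      _ ≤ (1 * ‖PE - PE'‖) * 1 :=
        mul_le_mul (mul_le_mul_of_nonneg_right hV'n (norm_nonneg _)) hVtn (norm_nonneg _)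
          (by positivity)
      _ = ‖PE - PE'‖ := by ring
  have t3 : ‖V' * PE' * (V - V')ᵀ‖ ≤ ‖V - V'‖ := by
    calc ‖V' * PE' * (V - V')ᵀ‖ ≤ ‖V' * PE'‖ * ‖(V - V')ᵀ‖ := Matrix.l2_opNorm_mul _ _
      _ ≤ (‖V'‖ * ‖PE'‖) * ‖(V - V')ᵀ‖ :=
        mul_le_mul_of_nonneg_right (Matrix.l2_opNorm_mul _ _) (norm_nonneg _)
      _ ≤ 1 * ‖V - V'‖ := by
        rw [hDt]
        exact mul_le_mul_of_nonneg_right (mul_le_one₀ hV'n (norm_nonneg _) hPE'n) hd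
      _ = ‖V - V'‖ := one_mul _
  calc ‖V * PE * Vᵀ - V' * PE' * V'ᵀ‖
      = ‖(V - V') * (PE * Vᵀ) + V' * (PE - PE') * Vᵀ + V' * PE' * (V - V')ᵀ‖ := by rw [key]
    _ ≤ ‖(V - V') * (PE * Vᵀ) + V' * (PE - PE') * Vᵀ‖ + ‖V' * PE' * (V - V')ᵀ‖ := norm_add_le _ _
    _ ≤ ‖(V - V') * (PE * Vᵀ)‖ + ‖V' * (PE - PE') * Vᵀ‖ + ‖V' * PE' * (V - V')ᵀ‖ := by
        gcongr; exact norm_add_le _ _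
    _ ≤ ‖V - V'‖ + ‖PE - PE'‖ + ‖V - V'‖ := by gcongr
    _ = ‖PE - PE'‖ + 2 * ‖V - V'‖ := by ring
end
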